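/- Consider the binary-state structures: u₁ uniform on {(Blue,0,0), (Blue,1,1), (Red,1,0), (Red,2,1)} (player 1 signals in {0,1,2}, player 2 signals in {0,1}), and u₂ where player 1 knows the state exactly and player 2 has no information (state uniform). Then the value-based distance satisfies d(u₁,u₂) = 1/2. -/

import Mathlib

open scoped BigOperators

noncomputable section

/-- A probability distribution on a finite type, given as a nonnegative function summing to 1. -/
def IsDist {α : Type*} [Fintype α] (u : α → ℝ) : Prop :=
  (∀ a, 0 ≤ u a) ∧ ∑ a, u a = 1

/-- A garbling (stochastic map / behavioral strategy). -/
def IsKernel {α β : Type*} [Fintype β] (q : α → β → ℝ) : Prop :=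
  ∀ a, IsDist (q a)

/-- Expected payoff in the zero-sum Bayesian game `Γ(u,g)` when players use
behavioral strategies `σ` and `τ`. -/
def pay {K C D I J : Type*} [Fintype K] [Fintype C] [Fintype D] [Fintype I] [Fintype J]
    (u : K × C × D → ℝ) (g : K → I → J → ℝ) (σ : C → I → ℝ) (τ : D → J → ℝ) : ℝ :=
  ∑ k, ∑ c, ∑ d, ∑ i, ∑ j, u (k, c, d) * σ c i * τ d j * g k i j

/-- The value (maxmin) of the zero-sum Bayesian game `Γ(u,g)`, player 1 maximizing. -/
def gameVal {K C D I J : Type*} [Fintype K] [Fintype C] [Fintype D] [Fintype I] [Fintype J]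
    (u : K × C × D → ℝ) (g : K → I → J → ℝ) : ℝ :=
  sSup {x : ℝ | ∃ σ : C → I → ℝ, IsKernel σ ∧
    x = sInf {y : ℝ | ∃ τ : D → J → ℝ, IsKernel τ ∧ y = pay u g σ τ}}

/-- Garbling of player 1's signal: `(q.u)(k,c,d) = ∑ c', u(k,c',d) q(c|c')`. -/
def garbleL {K C C' D : Type*} [Fintype C] (q : C → C' → ℝ) (u : K × C × D → ℝ) :
    K × C' × D → ℝ :=
  fun x => ∑ c, u (x.1, c, x.2.2) * q c x.2.1

/-- Garbling of player 2's signal: `(u.q)(k,c,d) = ∑ d', u(k,c,d') q(d|d')`. -/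
def garbleR {K C D D' : Type*} [Fintype D] (q : D → D' → ℝ) (u : K × C × D → ℝ) :
    K × C × D' → ℝ :=
  fun x => ∑ d, u (x.1, x.2.1, d) * q d x.2.2

/-- ℓ¹ distance. -/
def l1 {α : Type*} [Fintype α] (u v : α → ℝ) : ℝ := ∑ a, |u a - v a|

/-- Payoff functions bounded by 1. -/
def Bounded1 {K I J : Type*} (g : K → I → J → ℝ) : Prop := ∀ k i j, |g k i j| ≤ 1

/-- The value-based distance: sup over all finite zero-sum games (with nonempty
finite action sets, payoffs bounded by 1) of the absolute difference of values. -/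
def valueDist {K C D C' D' : Type*} [Fintype K] [Fintype C] [Fintype D] [Fintype C'] [Fintype D']
    (u : K × C × D → ℝ) (v : K × C' × D' → ℝ) : ℝ :=
  sSup {x : ℝ | ∃ (m n : ℕ) (g : K → Fin (m + 1) → Fin (n + 1) → ℝ),
    Bounded1 g ∧ x = |gameVal u g - gameVal v g|}

/-- Value of a single-agent decision problem on a single-agent information structure. -/
def val1 {K C I : Type*} [Fintype K] [Fintype C] [Fintype I] [Nonempty I]
    (u : K × C → ℝ) (g : K → I → ℝ) : ℝ :=
  ∑ c, ⨆ i, ∑ k, u (k, c) * g k i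

/-- The single-agent value-based distance. -/
def valueDist1 {K C C' : Type*} [Fintype K] [Fintype C] [Fintype C']
    (u : K × C → ℝ) (v : K × C' → ℝ) : ℝ :=
  sSup {x : ℝ | ∃ (m : ℕ) (g : K → Fin (m + 1) → ℝ),
    (∀ k i, |g k i| ≤ 1) ∧ x = |val1 u g - val1 v g|}

/-- Garbling of the signal in a single-agent structure. -/
def garble1 {K C C' : Type*} [Fintype C] (q : C → C' → ℝ) (u : K × C → ℝ) : K × C' → ℝ :=
  fun x => ∑ c, u (x.1, c) * q c x.2

end

/-- The structure `u₁`: uniform on `{(Blue,0,0), (Blue,1,1), (Red,1,0), (Red,2,1)}`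
with `Blue = 0`, `Red = 1`. -/
noncomputable def u1ex : Fin 2 × Fin 3 × Fin 2 → ℝ := fun x =>
  if (x.1 = 0 ∧ x.2.1 = 0 ∧ x.2.2 = 0) ∨ (x.1 = 0 ∧ x.2.1 = 1 ∧ x.2.2 = 1)
      ∨ (x.1 = 1 ∧ x.2.1 = 1 ∧ x.2.2 = 0) ∨ (x.1 = 1 ∧ x.2.1 = 2 ∧ x.2.2 = 1)
  then 1 / 4 else 0

/-- The structure `u₂`: player 1 knows the uniform state, player 2 has no information. -/
noncomputable def u2ex : Fin 2 × Fin 2 × Fin 1 → ℝ := fun x =>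
  if x.2.1 = x.1 then 1 / 2 else 0


/-!
Player 2's signal in `u₁` is independent of the state. So player 1 in `u₂`, who knows the state,
can simulate his `u₁`-signal (a fair coin among the signals compatible with the state), and every
strategy of player 2 in `u₂` is a signal-ignoring strategy in `u₁` with the same payoff: `u₁` is
never worth more than `u₂` to player 1. Conversely, in `u₁` player 1 can act as if the state were
Blue on signals `0, 1` and Red on signal `2`; he errs only on the event (Red, 1) of probability
`1/4`, where payoffs differ by at most `2`, so `u₂` is worth at most `1/2` more. The witness game
has value `1/2` on `u₂` and `0` on `u₁`.
-/

open Finset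

noncomputable section

section GeneralGames

variable {K C D I J : Type*} [Fintype I] [Fintype J]

lemma IsDist.apply_le_one {α : Type*} [Fintype α] {u : α → ℝ} (hu : IsDist u) (a : α) :
    u a ≤ 1 :=
  hu.2 ▸ single_le_sum (fun b _ => hu.1 b) (mem_univ a)

lemma isDist_fin_two {a b : ℝ} (ha : 0 ≤ a) (hb : 0 ≤ b) (hab : a + b = 1) : IsDist ![a, b] :=
  ⟨fun i => by fin_cases i <;> assumption, by simpa [Fin.sum_univ_two] using hab⟩

lemma IsDist.midpoint {α : Type*} [Fintype α] {a b : α → ℝ} (ha : IsDist a) (hb : IsDist b) :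
    IsDist fun i => (a i + b i) / 2 :=
  ⟨fun i => by linarith [ha.1 i, hb.1 i], by rw [← sum_div, sum_add_distrib, ha.2, hb.2]; norm_num⟩

lemma exists_isKernel (α β : Type*) [Fintype β] [Nonempty β] : ∃ q : α → β → ℝ, IsKernel q :=
  ⟨fun _ _ => (Fintype.card β : ℝ)⁻¹, fun _ =>
    ⟨fun _ => by positivity, by simp [Finset.card_univ]⟩⟩

def stagePay (g : K → I → J → ℝ) (ρ : I → ℝ) (μ : J → ℝ) (k : K) : ℝ :=
  ∑ i, ∑ j, ρ i * μ j * g k i j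

lemma abs_stagePay_le {g : K → I → J → ℝ} (hg : Bounded1 g) {ρ : I → ℝ} {μ : J → ℝ}
    (hρ : IsDist ρ) (hμ : IsDist μ) (k : K) : |stagePay g ρ μ k| ≤ 1 :=
  calc |stagePay g ρ μ k| ≤ ∑ i, ∑ j, ρ i * μ j := by
        refine (abs_sum_le_sum_abs _ _).trans <| sum_le_sum fun i _ =>
          (abs_sum_le_sum_abs _ _).trans <| sum_le_sum fun j _ => ?_
        have hρμ := mul_nonneg (hρ.1 i) (hμ.1 j)
        rw [abs_mul, abs_of_nonneg hρμ]
        exact mul_le_of_le_one_right hρμ (hg k i j)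
    _ = 1 := by rw [← sum_mul_sum, hρ.2, hμ.2, one_mul]

lemma stagePay_midpoint (g : K → I → J → ℝ) (a b : I → ℝ) (μ : J → ℝ) (k : K) :
    stagePay g (fun i => (a i + b i) / 2) μ k = (stagePay g a μ k + stagePay g b μ k) / 2 := by
  simp only [stagePay, ← sum_add_distrib, sum_div]
  exact sum_congr rfl fun i _ => sum_congr rfl fun j _ => by ring

variable [Fintype K] [Fintype C] [Fintype D]

lemma pay_eq_sum_stagePay (u : K × C × D → ℝ) (g : K → I → J → ℝ) (σ : C → I → ℝ)
    (τ : D → J → ℝ) :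
    pay u g σ τ = ∑ k, ∑ c, ∑ d, u (k, c, d) * stagePay g (σ c) (τ d) k := by
  simp only [pay, stagePay, mul_sum, mul_assoc]

lemma abs_pay_le (u : K × C × D → ℝ) {g : K → I → J → ℝ} (hg : Bounded1 g) {σ : C → I → ℝ}
    {τ : D → J → ℝ} (hσ : IsKernel σ) (hτ : IsKernel τ) : |pay u g σ τ| ≤ ∑ x, |u x| := by
  rw [pay_eq_sum_stagePay]
  simp only [Fintype.sum_prod_type]
  refine (abs_sum_le_sum_abs _ _).trans <| sum_le_sum fun k _ =>
    (abs_sum_le_sum_abs _ _).trans <| sum_le_sum fun c _ =>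
    (abs_sum_le_sum_abs _ _).trans <| sum_le_sum fun d _ => ?_
  rw [abs_mul]
  exact mul_le_of_le_one_right (abs_nonneg _) (abs_stagePay_le hg (hσ c) (hτ d) k)

/-- The payoff player 1 guarantees in `Γ(u,g)` with the strategy `σ`. -/
def secVal (u : K × C × D → ℝ) (g : K → I → J → ℝ) (σ : C → I → ℝ) : ℝ :=
  sInf {y : ℝ | ∃ τ : D → J → ℝ, IsKernel τ ∧ y = pay u g σ τ}

variable {u : K × C × D → ℝ} {g : K → I → J → ℝ} {σ : C → I → ℝ}

lemma secVal_le_pay (hg : Bounded1 g) (hσ : IsKernel σ) {τ : D → J → ℝ} (hτ : IsKernel τ) :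
    secVal u g σ ≤ pay u g σ τ := by
  refine csInf_le ⟨-∑ x, |u x|, ?_⟩ ⟨τ, hτ, rfl⟩
  rintro _ ⟨τ', hτ', rfl⟩
  exact neg_le_of_abs_le (abs_pay_le u hg hσ hτ')

lemma le_secVal [Nonempty J] {b : ℝ} (h : ∀ τ : D → J → ℝ, IsKernel τ → b ≤ pay u g σ τ) :
    b ≤ secVal u g σ := by
  obtain ⟨τ, hτ⟩ := exists_isKernel D J
  refine le_csInf ⟨_, τ, hτ, rfl⟩ ?_
  rintro _ ⟨τ', hτ', rfl⟩
  exact h τ' hτ'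

lemma secVal_le_gameVal [Nonempty J] (hg : Bounded1 g) (hσ : IsKernel σ) :
    secVal u g σ ≤ gameVal u g := by
  obtain ⟨τ, hτ⟩ := exists_isKernel D J
  refine le_csSup ⟨∑ x, |u x|, ?_⟩ ⟨σ, hσ, rfl⟩
  rintro _ ⟨σ', hσ', rfl⟩
  exact (secVal_le_pay hg hσ' hτ).trans (le_of_abs_le (abs_pay_le u hg hσ' hτ))

lemma gameVal_le [Nonempty I] {b : ℝ} (h : ∀ σ : C → I → ℝ, IsKernel σ → secVal u g σ ≤ b) :
    gameVal u g ≤ b := by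
  obtain ⟨σ, hσ⟩ := exists_isKernel C I
  refine csSup_le ⟨_, σ, hσ, rfl⟩ ?_
  rintro _ ⟨σ', hσ', rfl⟩
  exact h σ' hσ'

end GeneralGames

section Example

variable {I J : Type*} [Fintype I] [Fintype J]

lemma pay_u1ex (g : Fin 2 → I → J → ℝ) (σ : Fin 3 → I → ℝ) (τ : Fin 2 → J → ℝ) :
    pay u1ex g σ τ = (stagePay g (σ 0) (τ 0) 0 + stagePay g (σ 1) (τ 1) 0
      + stagePay g (σ 1) (τ 0) 1 + stagePay g (σ 2) (τ 1) 1) / 4 := by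
  rw [pay_eq_sum_stagePay]
  simp [Fin.sum_univ_two, Fin.sum_univ_three, u1ex]
  ring

lemma pay_u2ex (g : Fin 2 → I → J → ℝ) (σ : Fin 2 → I → ℝ) (τ : Fin 1 → J → ℝ) :
    pay u2ex g σ τ = (stagePay g (σ 0) (τ 0) 0 + stagePay g (σ 1) (τ 0) 1) / 2 := by
  rw [pay_eq_sum_stagePay]
  simp [Fin.sum_univ_two, u2ex]
  ring

variable [Nonempty I] [Nonempty J] {g : Fin 2 → I → J → ℝ}

lemma gameVal_u1ex_le_gameVal_u2ex (hg : Bounded1 g) : gameVal u1ex g ≤ gameVal u2ex g := by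
  refine gameVal_le fun σ hσ => ?_
  let σ' : Fin 2 → I → ℝ := ![fun i => (σ 0 i + σ 1 i) / 2, fun i => (σ 1 i + σ 2 i) / 2]
  have hσ' : IsKernel σ' := by
    intro k
    fin_cases k
    exacts [(hσ 0).midpoint (hσ 1), (hσ 1).midpoint (hσ 2)]
  refine (le_secVal fun τ _ => ?_).trans (secVal_le_gameVal hg hσ')
  calc secVal u1ex g σ ≤ pay u1ex g σ fun _ => τ 0 := secVal_le_pay hg hσ fun _ => ‹IsKernel τ› 0
    _ = pay u2ex g σ' τ := by
      rw [pay_u1ex, pay_u2ex]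
      simp only [σ', Matrix.cons_val_zero, Matrix.cons_val_one, stagePay_midpoint]
      ring

lemma gameVal_u2ex_le_gameVal_u1ex_add (hg : Bounded1 g) :
    gameVal u2ex g ≤ gameVal u1ex g + 1 / 2 := by
  refine gameVal_le fun σ hσ => ?_
  let σ' : Fin 3 → I → ℝ := ![σ 0, σ 0, σ 1]
  have hσ' : IsKernel σ' := by
    intro c
    fin_cases c
    exacts [hσ 0, hσ 0, hσ 1]
  suffices secVal u2ex g σ - 1 / 2 ≤ secVal u1ex g σ' by
    linarith [secVal_le_gameVal hg hσ' (u := u1ex)]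
  refine le_secVal fun τ hτ => ?_
  have h₀ := secVal_le_pay hg hσ (u := u2ex) fun _ => hτ 0
  have h₁ := secVal_le_pay hg hσ (u := u2ex) fun _ => hτ 1
  have e₀ := abs_le.mp (abs_stagePay_le hg (hσ 0) (hτ 0) 1)
  have e₁ := abs_le.mp (abs_stagePay_le hg (hσ 1) (hτ 0) 1)
  rw [pay_u2ex] at h₀ h₁
  rw [pay_u1ex]
  simp only [σ', Matrix.cons_val_zero, Matrix.cons_val_one, Matrix.cons_val_two,
    Matrix.tail_cons, Matrix.head_cons]
  linarith

end Example

def witnessGame : Fin 2 → Fin 2 → Fin 2 → ℝ :=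
  ![![![0, 1], ![0, -1]], ![![-1, 0], ![1, 0]]]

lemma bounded_witnessGame : Bounded1 witnessGame := by
  intro k i j
  fin_cases k <;> fin_cases i <;> fin_cases j <;> norm_num [witnessGame]

lemma stagePay_witnessGame_zero (ρ μ : Fin 2 → ℝ) :
    stagePay witnessGame ρ μ 0 = (ρ 0 - ρ 1) * μ 1 := by
  simp [stagePay, witnessGame, Fin.sum_univ_two]
  ring

lemma stagePay_witnessGame_one (ρ μ : Fin 2 → ℝ) :
    stagePay witnessGame ρ μ 1 = (ρ 1 - ρ 0) * μ 0 := by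
  simp [stagePay, witnessGame, Fin.sum_univ_two]
  ring

lemma gameVal_u2ex_witnessGame : gameVal u2ex witnessGame = 1 / 2 := by
  have hunif : IsKernel fun _ : Fin 1 => ![(1 / 2 : ℝ), 1 / 2] :=
    fun _ => isDist_fin_two (by norm_num) (by norm_num) (by norm_num)
  have hreveal : IsKernel ![![(1 : ℝ), 0], ![0, 1]] := by
    intro k
    fin_cases k <;> exact isDist_fin_two (by norm_num) (by norm_num) (by norm_num)
  refine le_antisymm (gameVal_le fun σ hσ => ?_) ?_
  · refine (secVal_le_pay bounded_witnessGame hσ hunif).trans ?_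
    rw [pay_u2ex, stagePay_witnessGame_zero, stagePay_witnessGame_one]
    simp only [Matrix.cons_val_zero, Matrix.cons_val_one]
    linarith [(hσ 0).apply_le_one 0, (hσ 0).1 1, (hσ 1).apply_le_one 1, (hσ 1).1 0]
  · refine (le_secVal fun τ hτ => ?_).trans (secVal_le_gameVal bounded_witnessGame hreveal)
    rw [pay_u2ex, stagePay_witnessGame_zero, stagePay_witnessGame_one]
    have hτ₀ := (hτ 0).2
    simp only [Fin.sum_univ_two] at hτ₀
    simp only [Matrix.cons_val_zero, Matrix.cons_val_one]
    linarith

lemma gameVal_u1ex_witnessGame : gameVal u1ex witnessGame = 0 := by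
  have hpure : IsKernel ![![(1 : ℝ), 0], ![0, 1]] := by
    intro k
    fin_cases k <;> exact isDist_fin_two (by norm_num) (by norm_num) (by norm_num)
  have hσ : IsKernel ![![(1 : ℝ), 0], ![1 / 2, 1 / 2], ![0, 1]] := by
    intro c
    fin_cases c <;> exact isDist_fin_two (by norm_num) (by norm_num) (by norm_num)
  refine le_antisymm (gameVal_le fun σ hσ => ?_) ?_
  · refine (secVal_le_pay bounded_witnessGame hσ hpure).trans (le_of_eq ?_)
    rw [pay_u1ex, stagePay_witnessGame_zero, stagePay_witnessGame_one,
      stagePay_witnessGame_zero, stagePay_witnessGame_one]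
    simp only [Matrix.cons_val_zero, Matrix.cons_val_one]
    ring
  · refine (le_secVal fun τ hτ => ?_).trans (secVal_le_gameVal bounded_witnessGame hσ)
    rw [pay_u1ex, stagePay_witnessGame_zero, stagePay_witnessGame_one,
      stagePay_witnessGame_zero, stagePay_witnessGame_one]
    simp only [Matrix.cons_val_zero, Matrix.cons_val_one, Matrix.cons_val_two,
      Matrix.tail_cons, Matrix.head_cons]
    linarith [(hτ 0).1 1, (hτ 1).1 0]

end

theorem stmt17 : valueDist u1ex u2ex = 1 / 2 := by
  refine IsGreatest.csSup_eq ⟨⟨1, 1, witnessGame, bounded_witnessGame, ?_⟩, ?_⟩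
  · rw [gameVal_u1ex_witnessGame, gameVal_u2ex_witnessGame]
    norm_num
  · rintro _ ⟨m, n, g, hg, rfl⟩
    have h₁ := gameVal_u1ex_le_gameVal_u2ex hg
    have h₂ := gameVal_u2ex_le_gameVal_u1ex_add hg
    rw [abs_sub_le_iff]
    constructor <;> linarith
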